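/- If C is PP, then C is purified (in particular, C is semiprime and for all distinct minimal primes p,q of C there exists a complemented a ∈ C with a ≤ p and a⊥ ≤ q). -/

import Mathlib

open CompleteLattice

/-- A complete lattice equipped with a commutator operation, axiomatizing the congruence
lattice of an algebra in a semidegenerate congruence-modular variety whose compact
congruences are closed under the commutator. -/
class CommutatorLattice (C : Type*) [CompleteLattice C] where
  comm : C → C → C
  comm_comm : ∀ a b : C, comm a b = comm b a
  comm_sSup : ∀ (s : Set C) (b : C), comm (sSup s) b = ⨆ a ∈ s, comm a b
  comm_le_inf : ∀ a b : C, comm a b ≤ a ⊓ b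
  comm_top : ∀ a : C, comm a ⊤ = a
  compactlyGenerated : ∀ x : C,
    ∃ s : Set C, (∀ a ∈ s, IsCompactElement a) ∧ sSup s = x
  top_isCompact : IsCompactElement (⊤ : C)
  comm_isCompact : ∀ a b : C, IsCompactElement a → IsCompactElement b →
    IsCompactElement (comm a b)

namespace CommutatorLattice

variable {C : Type*} [CompleteLattice C] [CommutatorLattice C]

/-- The residuation `a → b := ⨆ {c | [a,c] ≤ b}`. -/
def resid (a b : C) : C := sSup {c : C | comm a c ≤ b}

/-- The annihilator `a⊥ := a → ⊥`. -/
def ann (a : C) : C := resid a ⊥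

/-- Iterated commutator: `cpow a n = [a,a]^n`, with the convention `[a,a]^0 = a`.
Note that `[a,b]^n` for `n ≥ 1` equals `cpow (comm a b) (n-1)`. -/
def cpow (a : C) : ℕ → C
  | 0 => a
  | n + 1 => comm (cpow a n) (cpow a n)

/-- Prime elements: `p ≠ ⊤` and `[a,b] ≤ p` implies `a ≤ p` or `b ≤ p`. -/
def IsPrime (p : C) : Prop := p ≠ ⊤ ∧ ∀ a b : C, comm a b ≤ p → a ≤ p ∨ b ≤ p

/-- The radical `ρ(a) := ⨅ {p prime | a ≤ p}`. -/
def radical (a : C) : C := sInf {p : C | IsPrime p ∧ a ≤ p}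

variable (C) in
/-- `C` is semiprime if `ρ(⊥) = ⊥`. -/
def Semiprime : Prop := radical (⊥ : C) = ⊥

variable (C) in
/-- Condition (⋆): for all compact `a`, `b` and all `n ≥ 1` there is `m ≥ 0` with
`[[a,a]^m, [b,b]^m] ≤ [a,b]^n`.  Here `cpow (comm a b) n = [a,b]^(n+1)`, so `n : ℕ`
ranges exactly over the exponents `≥ 1` of the paper. -/
def Star : Prop := ∀ a b : C, IsCompactElement a → IsCompactElement b →
  ∀ n : ℕ, ∃ m : ℕ, comm (cpow a m) (cpow b m) ≤ cpow (comm a b) n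

/-- Pure elements: `t ⊔ a⊥ = ⊤` for every compact `a ≤ t`. -/
def IsPure (t : C) : Prop := ∀ a : C, IsCompactElement a → a ≤ t → t ⊔ ann a = ⊤

/-- w-pure elements: `t ⊔ (a → ρ(⊥)) = ⊤` for every compact `a ≤ t`. -/
def IsWPure (t : C) : Prop :=
  ∀ a : C, IsCompactElement a → a ≤ t → t ⊔ resid a (radical ⊥) = ⊤

/-- Complemented elements. -/
def IsComplEl (a : C) : Prop := ∃ b : C, a ⊔ b = ⊤ ∧ a ⊓ b = ⊥

/-- Regular elements: joins of sets of complemented elements. -/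
def IsRegular (t : C) : Prop := ∃ S : Set C, (∀ a ∈ S, IsComplEl a) ∧ t = sSup S

/-- Max-regular elements: maximal among regular elements distinct from `⊤`. -/
def IsMaxRegular (t : C) : Prop :=
  IsRegular t ∧ t ≠ ⊤ ∧ ∀ u : C, IsRegular u → u ≠ ⊤ → t ≤ u → u = t

/-- Maximal elements of `C \ {⊤}`. -/
def IsMaximal (p : C) : Prop := p ≠ ⊤ ∧ ∀ q : C, q ≠ ⊤ → p ≤ q → q = p

/-- Minimal primes. -/
def IsMinPrime (p : C) : Prop := IsPrime p ∧ ∀ q : C, IsPrime q → q ≤ p → q = p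

variable (C) in
/-- `C` is mp if every prime lies above a unique minimal prime. -/
def MP : Prop := ∀ p : C, IsPrime p → ∃! q : C, IsMinPrime q ∧ q ≤ p

variable (C) in
/-- `C` is PF if `a⊥` is pure for every compact `a`. -/
def PF : Prop := ∀ a : C, IsCompactElement a → IsPure (ann a)

variable (C) in
/-- `C` is PP if `a⊥` is complemented for every compact `a`. -/
def PP : Prop := ∀ a : C, IsCompactElement a → IsComplEl (ann a)

/-- `O(p) := ⨆ {a compact | a⊥ ≰ p}`. -/
def O (p : C) : C := sSup {a : C | IsCompactElement a ∧ ¬ ann a ≤ p}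

variable (C) in
/-- `C` is normal. -/
def Normal : Prop := ∀ t u : C, t ⊔ u = ⊤ →
  ∃ a b : C, t ⊔ a = ⊤ ∧ u ⊔ b = ⊤ ∧ comm a b = ⊥

variable (C) in
/-- `C` is B-normal. -/
def BNormal : Prop := ∀ t u : C, t ⊔ u = ⊤ →
  ∃ a b : C, IsComplEl a ∧ IsComplEl b ∧ t ⊔ a = ⊤ ∧ u ⊔ b = ⊤ ∧ comm a b = ⊥

variable (C) in
/-- `C` is purified. -/
def Purified : Prop := ∀ p q : C, IsMinPrime p → IsMinPrime q → p ≠ q →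
  ∃ a : C, IsComplEl a ∧ a ≤ p ∧ ann a ≤ q

variable (C) in
/-- The prime spectrum of `C`. -/
abbrev Spec := {p : C // IsPrime p}

variable (C) in
/-- The Zariski topology on `Spec C`: the closed sets are the `V(t) = {p | t ≤ p}`,
equivalently the topology generated by the sets `D(t) = {p | t ≰ p}`. -/
def zariskiTop : TopologicalSpace (Spec C) :=
  TopologicalSpace.generateFrom {U : Set (Spec C) | ∃ t : C, U = {p : Spec C | ¬ t ≤ p.1}}

variable (C) in
/-- The flat topology on `Spec C`: generated by the open basis `V(a)`, `a` compact. -/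
def flatTop : TopologicalSpace (Spec C) :=
  TopologicalSpace.generateFrom
    {U : Set (Spec C) | ∃ a : C, IsCompactElement a ∧ U = {p : Spec C | a ≤ p.1}}

/-!
PP makes `C` reduced: if `[a,a] = ⊥` for a compact `a`, then `a ≤ a⊥`, so the complement of `a⊥`
is disjoint from `a⊥` and annihilated by `a`, hence it is `⊥`; thus `a⊥ = ⊤` and
`a = [a,⊤] = [a,a⊥] = ⊥`. A compact `a ≤ ρ(⊥)` has some `[a,a]^n = ⊥`, since otherwise a Zorn
argument produces a prime avoiding every `[a,a]^n`; so `C` is semiprime.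

For distinct minimal primes `p, q` take a compact `b ≤ q` with `b ≰ p` and put `a := b⊥`. It is
complemented by PP and lies below `p` because `[b,b⊥] = ⊥`. Moreover `a⊥ ≤ q` as soon as `b⊥ ≰ q`,
and this holds below any minimal prime of a semiprime lattice: otherwise the compacts `t` with
`[s,[b,b]^n] ≤ ρ(t)` for some `n` and some compact `s ≰ q` are closed under commutators and avoid
`⊥`, so some prime avoids them all; it lies below `q`, as it misses every compact `≰ q`, but not
above `b`, contradicting minimality.
-/

instance : IsCompactlyGenerated C := ⟨compactlyGenerated⟩

lemma comm_sup_left (a b c : C) : comm (a ⊔ b) c = comm a c ⊔ comm b c := by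
  simpa only [sSup_pair, iSup_pair] using comm_sSup {a, b} c

lemma comm_mono {a a' b b' : C} (ha : a ≤ a') (hb : b ≤ b') : comm a b ≤ comm a' b' := by
  have mono_left : ∀ {x x' : C} (y : C), x ≤ x' → comm x y ≤ comm x' y := fun y h => by
    rw [← sup_eq_right.mpr h, comm_sup_left]
    exact le_sup_left
  calc comm a b ≤ comm a' b := mono_left b ha
    _ = comm b a' := comm_comm ..
    _ ≤ comm b' a' := mono_left a' hb
    _ = comm a' b' := comm_comm ..

lemma comm_le_left (a b : C) : comm a b ≤ a := (comm_le_inf a b).trans inf_le_left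

lemma comm_le_right (a b : C) : comm a b ≤ b := (comm_le_inf a b).trans inf_le_right

lemma comm_sup_sup_le (m u v : C) : comm (m ⊔ u) (m ⊔ v) ≤ m ⊔ comm u v := by
  rw [comm_sup_left, comm_comm u, comm_sup_left, comm_comm v u]
  exact sup_le (le_sup_of_le_left (comm_le_left ..))
    (sup_le (le_sup_of_le_left (comm_le_left ..)) le_sup_right)

lemma le_ann_iff {a b : C} : b ≤ ann a ↔ comm a b = ⊥ := by
  refine ⟨fun hb => le_bot_iff.mp ?_, fun hb => le_sSup hb.le⟩
  calc comm a b ≤ comm a (ann a) := comm_mono le_rfl hb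
    _ = comm (ann a) a := comm_comm ..
    _ = ⨆ c ∈ {c | comm a c ≤ ⊥}, comm c a := comm_sSup _ _
    _ ≤ ⊥ := iSup₂_le fun c hc => (comm_comm c a).le.trans hc

lemma comm_ann (a : C) : comm a (ann a) = ⊥ := le_ann_iff.mp le_rfl

lemma IsPrime.ann_le {p a : C} (hp : IsPrime p) (ha : ¬ a ≤ p) : ann a ≤ p :=
  (hp.2 a (ann a) ((comm_ann a).le.trans bot_le)).resolve_left ha

lemma le_radical (a : C) : a ≤ radical a := le_sInf fun _ hp => hp.2

lemma radical_le {a p : C} (hp : IsPrime p) (h : a ≤ p) : radical a ≤ p := sInf_le ⟨hp, h⟩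

lemma radical_mono : Monotone (radical : C → C) :=
  fun _ _ h => sInf_le_sInf fun _ hp => ⟨hp.1, h.trans hp.2⟩

lemma radical_inf_le_radical_comm (a b : C) : radical a ⊓ radical b ≤ radical (comm a b) :=
  le_sInf fun _ ⟨hp, hab⟩ => (hp.2 a b hab).elim
    (fun h => inf_le_left.trans (radical_le hp h)) (fun h => inf_le_right.trans (radical_le hp h))

lemma isCompactElement_cpow {a : C} (ha : IsCompactElement a) (n : ℕ) :
    IsCompactElement (cpow a n) := by
  induction n with
  | zero => exact ha
  | succ n ih => exact comm_isCompact _ _ ih ih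

lemma cpow_antitone (a : C) : Antitone (cpow a) :=
  antitone_nat_of_succ_le fun n => comm_le_left (cpow a n) (cpow a n)

lemma IsPrime.le_of_cpow_le {p a : C} (hp : IsPrime p) {n : ℕ} (h : cpow a n ≤ p) : a ≤ p := by
  induction n with
  | zero => exact h
  | succ n ih => exact (hp.2 _ _ h).elim ih ih

lemma radical_cpow (a : C) (n : ℕ) : radical (cpow a n) = radical a :=
  le_antisymm (radical_mono (cpow_antitone a n.zero_le))
    (le_sInf fun _ ⟨hp, h⟩ => radical_le hp (hp.le_of_cpow_le h))

lemma exists_isPrime_forall_not_le {T : Set C} (hne : T.Nonempty)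
    (hcomp : ∀ t ∈ T, IsCompactElement t) (hbot : ∀ t ∈ T, t ≠ ⊥)
    (hcomm : ∀ s ∈ T, ∀ t ∈ T, ∃ u ∈ T, u ≤ comm s t) :
    ∃ p : C, IsPrime p ∧ ∀ t ∈ T, ¬ t ≤ p := by
  set S := {x : C | ∀ t ∈ T, ¬ t ≤ x}
  -- compactness of the elements of `T` makes `S` closed under joins of chains
  obtain ⟨m, -, hmS, hmax⟩ := zorn_le_nonempty₀ S (fun c hcS hc y hy => ⟨sSup c, fun t ht hle => by
      obtain ⟨x, hx, htx⟩ := (isCompactElement_iff_le_of_directed_sSup_le _ t).mp (hcomp t ht)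
        c ⟨y, hy⟩ hc.directedOn hle
      exact hcS hx t ht htx, fun _ => le_sSup⟩) ⊥ fun t ht => hbot t ht ∘ le_bot_iff.mp
  have escape : ∀ u, ¬ u ≤ m → ∃ t ∈ T, t ≤ m ⊔ u := fun u hu => by
    by_contra! h
    exact hu (le_sup_right.trans (hmax h le_sup_left))
  refine ⟨m, ⟨fun hm => ?_, fun u v huv => ?_⟩, hmS⟩
  · obtain ⟨t, ht⟩ := hne
    exact hmS t ht (hm ▸ le_top)
  · by_contra! huv'
    obtain ⟨t₁, ht₁, hle₁⟩ := escape u huv'.1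
    obtain ⟨t₂, ht₂, hle₂⟩ := escape v huv'.2
    obtain ⟨w, hw, hwle⟩ := hcomm t₁ ht₁ t₂ ht₂
    exact hmS w hw <| hwle.trans <| (comm_mono hle₁ hle₂).trans <|
      (comm_sup_sup_le m u v).trans (sup_le le_rfl huv)

lemma exists_cpow_eq_bot_of_le_radical_bot {a : C} (ha : IsCompactElement a)
    (h : a ≤ radical ⊥) : ∃ n, cpow a n = ⊥ := by
  by_contra! hne
  obtain ⟨p, hp, hap⟩ := exists_isPrime_forall_not_le (T := Set.range (cpow a)) ⟨a, 0, rfl⟩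
    (by rintro _ ⟨n, rfl⟩; exact isCompactElement_cpow ha n) (by rintro _ ⟨n, rfl⟩; exact hne n)
    (by
      rintro _ ⟨n, rfl⟩ _ ⟨k, rfl⟩
      exact ⟨cpow a (max n k + 1), ⟨_, rfl⟩,
        comm_mono (cpow_antitone a (le_max_left n k)) (cpow_antitone a (le_max_right n k))⟩)
  exact hap a ⟨0, rfl⟩ (h.trans (radical_le hp bot_le))

lemma PP.eq_bot_of_comm_self_eq_bot (h : PP C) {a : C} (ha : IsCompactElement a)
    (haa : comm a a = ⊥) : a = ⊥ := by
  obtain ⟨f, hsup, hinf⟩ := h a ha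
  have hf : f ≤ ann a ⊓ f := by
    refine le_inf (le_ann_iff.mpr (le_bot_iff.mp ?_)) le_rfl
    calc comm a f ≤ a ⊓ f := comm_le_inf a f
      _ ≤ ann a ⊓ f := inf_le_inf_right f (le_ann_iff.mpr haa)
      _ = ⊥ := hinf
  rw [hinf, le_bot_iff] at hf
  rw [hf, sup_bot_eq] at hsup
  rw [← comm_top a, ← hsup, comm_ann]

lemma PP.semiprime (h : PP C) : Semiprime C := by
  refine le_bot_iff.mp (le_iff_compact_le_imp.mpr fun a ha hle => ?_)
  obtain ⟨n, hn⟩ := exists_cpow_eq_bot_of_le_radical_bot ha hle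
  induction n with
  | zero => exact hn.le
  | succ n ih => exact ih (h.eq_bot_of_comm_self_eq_bot (isCompactElement_cpow ha n) hn)

lemma Semiprime.comm_eq_bot_of_comm_cpow_eq_bot (hsp : Semiprime C) {a b : C} {n : ℕ}
    (h : comm a (cpow b n) = ⊥) : comm a b = ⊥ := by
  refine le_bot_iff.mp ?_
  calc comm a b ≤ radical a ⊓ radical (cpow b n) := by
        rw [radical_cpow]
        exact (comm_le_inf a b).trans (inf_le_inf (le_radical a) (le_radical b))
    _ ≤ radical (comm a (cpow b n)) := radical_inf_le_radical_comm ..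
    _ = ⊥ := by rw [h]; exact hsp

lemma IsMinPrime.not_ann_le (hsp : Semiprime C) {q b : C} (hq : IsMinPrime q)
    (hb : IsCompactElement b) (hbq : b ≤ q) : ¬ ann b ≤ q := by
  intro hann
  set T := {t : C | IsCompactElement t ∧
    ∃ s, IsCompactElement s ∧ ¬ s ≤ q ∧ ∃ n, comm s (cpow b n) ≤ radical t}
  have mem_of_not_le (t : C) (ht : IsCompactElement t) (htq : ¬ t ≤ q) : t ∈ T :=
    ⟨ht, t, ht, htq, 0, (comm_le_left _ _).trans (le_radical t)⟩
  have hbT : b ∈ T := ⟨hb, ⊤, top_isCompact, fun h => hq.1.1 (top_le_iff.mp h), 0,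
    (comm_le_right _ _).trans (le_radical b)⟩
  have hcomm : ∀ s ∈ T, ∀ t ∈ T, comm s t ∈ T := by
    rintro t₁ ⟨ht₁, s₁, hs₁, hs₁q, n₁, h₁⟩ t₂ ⟨ht₂, s₂, hs₂, hs₂q, n₂, h₂⟩
    refine ⟨comm_isCompact _ _ ht₁ ht₂, comm s₁ s₂, comm_isCompact _ _ hs₁ hs₂,
      fun h => (hq.1.2 _ _ h).elim hs₁q hs₂q, max n₁ n₂,
      le_trans (le_inf ?_ ?_) (radical_inf_le_radical_comm t₁ t₂)⟩
    · exact (comm_mono (comm_le_left _ _) (cpow_antitone b (le_max_left _ _))).trans h₁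
    · exact (comm_mono (comm_le_right _ _) (cpow_antitone b (le_max_right _ _))).trans h₂
  have hbot : ∀ t ∈ T, t ≠ ⊥ := by
    rintro t ⟨-, s, -, hsq, n, hsn⟩ rfl
    have hsb : comm s (cpow b n) = ⊥ := le_bot_iff.mp (hsn.trans_eq hsp)
    refine hsq ((le_ann_iff.mpr ?_).trans hann)
    rw [comm_comm]
    exact hsp.comm_eq_bot_of_comm_cpow_eq_bot hsb
  obtain ⟨x, hx, hxT⟩ := exists_isPrime_forall_not_le ⟨b, hbT⟩ (fun t ht => ht.1) hbot
    fun s hs t ht => ⟨_, hcomm s hs t ht, le_rfl⟩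
  have hxq : x ≤ q := le_iff_compact_le_imp.mpr fun a ha hax =>
    by_contra fun haq => hxT a (mem_of_not_le a ha haq) hax
  exact hxT b hbT (hq.2 x hx hxq ▸ hbq)

lemma PP.purified (h : PP C) : Purified C := by
  intro p q hp hq hpq
  obtain ⟨b, hb, hbq, hbp⟩ : ∃ b, IsCompactElement b ∧ b ≤ q ∧ ¬ b ≤ p := by
    by_contra! hcon
    exact hpq (hp.2 q hq.1 (le_iff_compact_le_imp.mpr hcon)).symm
  exact ⟨ann b, h b hb, hp.1.ann_le hbp, hq.1.ann_le (hq.not_ann_le h.semiprime hb hbq)⟩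

theorem statement19 (h : PP C) : Semiprime C ∧ Purified C := ⟨h.semiprime, h.purified⟩

end CommutatorLattice
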